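/- The measures g3 and g5 are independent of each other for strongly possible multivalued dependencies: there exist an incomplete table T1 with attribute sets X1, Y1 such that g3(X1 ↠_sp Y1) > g5(X1 ↠_sp Y1), and an incomplete table T2 with attribute sets X2, Y2 such that g3(X2 ↠_sp Y2) < g5(X2 ↠_sp Y2). -/

import Mathlib

/- Common framework: incomplete tables, strongly possible worlds and constraints.
   A tuple assigns each attribute a value in `Option V`, with `none` encoding the
   null marker ⊥.  In the degenerate case of an attribute whose active domain is
   empty, the fresh symbol `s` (outside all domains) is encoded by `none` in the
   strongly possible world: it is a single fixed symbol, equal only to itself and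
   different from every domain value, exactly as `none` behaves. -/

namespace SPDB

variable {α V : Type} [DecidableEq α] [DecidableEq V]

/-- A tuple over attribute type `α` with values in `V`; `none` is the null ⊥. -/
abbrev Tuple (α V : Type) := α → Option V

/-- An incomplete table: a finite multiset of tuples. -/
abbrev Table (α V : Type) := Multiset (Tuple α V)

/-- The active domain of attribute `A` in table `T`: the non-null values in column `A`. -/
def VD (T : Table α V) (A : α) : Finset V :=
  (T.filterMap fun t => t A).toFinset

/-- `t'` is a strongly possible extension of `t` w.r.t. the active domains of `T`:
non-null entries are kept, each null is replaced by an active domain value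
(by the fresh symbol, encoded `none`, if the active domain is empty). -/
def spExt (T : Table α V) (t t' : Tuple α V) : Prop :=
  ∀ A, (t A ≠ none → t' A = t A) ∧
       (t A = none → if (VD T A).Nonempty then ∃ v ∈ VD T A, t' A = some v
                     else t' A = none)

/-- `T'` is a strongly possible world of `T`. -/
def spWorld (T T' : Table α V) : Prop := Multiset.Rel (spExt T) T T'

/-- Two tuples agree on the attribute set `X`. -/
def agrees (X : Finset α) (t1 t2 : Tuple α V) : Prop := ∀ A ∈ X, t1 A = t2 A

/-- Weak similarity on the attribute set `X`. -/
def weakSim (X : Finset α) (t1 t2 : Tuple α V) : Prop :=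
  ∀ A ∈ X, t1 A = t2 A ∨ t1 A = none ∨ t2 A = none

/-- `t` is `X`-total: no nulls among the attributes of `X`. -/
def isTotal (X : Finset α) (t : Tuple α V) : Prop := ∀ A ∈ X, t A ≠ none

instance (X : Finset α) : DecidablePred (isTotal (V := V) X) := fun t =>
  decidable_of_iff (∀ A ∈ X, t A ≠ none) Iff.rfl

/-- Projection of a tuple to the attribute set `X` (nulls outside `X`). -/
def proj (X : Finset α) (t : Tuple α V) : Tuple α V :=
  fun A => if A ∈ X then t A else none

/-- A (complete) table satisfies the key `K`: tuple occurrences are pairwise distinct on `K`. -/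
def keyOn (K : Finset α) (T' : Table α V) : Prop := (T'.map (proj K)).Nodup

/-- A (complete) table satisfies the functional dependency `X → Y`. -/
def FD (X Y : Finset α) (T' : Table α V) : Prop :=
  ∀ t1 ∈ T', ∀ t2 ∈ T', agrees X t1 t2 → agrees Y t1 t2

/-- A (complete) table over schema `R` satisfies the multivalued dependency `X ↠ Y`. -/
def MVD (R X Y : Finset α) (T' : Table α V) : Prop :=
  ∀ t1 ∈ T', ∀ t2 ∈ T', agrees X t1 t2 →
    ∃ t ∈ T', agrees (X ∪ Y) t t1 ∧ agrees (X ∪ (R \ Y)) t t2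

/-- A (complete) table satisfies the cross join `X × Y`. -/
def CJ (X Y : Finset α) (T' : Table α V) : Prop :=
  ∀ t1 ∈ T', ∀ t2 ∈ T', ∃ t ∈ T', agrees X t t1 ∧ agrees Y t t2

/-- `K` is a strongly possible key of `T`: `sp⟨K⟩`. -/
def spKey (T : Table α V) (K : Finset α) : Prop :=
  ∃ T', spWorld T T' ∧ keyOn K T'

/-- The strongly possible functional dependency `X →_sp Y` holds in `T`. -/
def spFD (T : Table α V) (X Y : Finset α) : Prop :=
  ∃ T', spWorld T T' ∧ FD X Y T'

/-- The strongly possible multivalued dependency `X ↠_sp Y` holds in `T` over schema `R`. -/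
def spMVD (R : Finset α) (T : Table α V) (X Y : Finset α) : Prop :=
  ∃ T', spWorld T T' ∧ MVD R X Y T'

/-- The strongly possible cross join `X ×_sp Y` holds in `T`. -/
def spCJ (T : Table α V) (X Y : Finset α) : Prop :=
  ∃ T', spWorld T T' ∧ CJ X Y T'

/-- Lien's null multivalued dependency `X ↠ Y` over schema `R`. -/
def NMVD (R : Finset α) (T : Table α V) (X Y : Finset α) : Prop :=
  ∀ t1 ∈ T, ∀ t2 ∈ T, isTotal X t1 → isTotal X t2 → agrees X t1 t2 →
    ∃ t ∈ T, agrees (X ∪ Y) t t1 ∧ agrees (X ∪ (R \ Y)) t t2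

/-- The minimum number of tuples whose removal from `T` makes `P` hold
(`T = T₀ + S` means that `S` is a submultiset of `T` and `T₀ = T ∖ S`). -/
noncomputable def g3Card (T : Table α V) (P : Table α V → Prop) : ℕ :=
  sInf {n : ℕ | ∃ T₀ S : Table α V, T = T₀ + S ∧ P T₀ ∧ Multiset.card S = n}

/-- `g3`: the minimum, over submultisets `S` of `T` whose removal makes the
constraint `P` hold, of `|S|/|T|`. -/
noncomputable def g3 (T : Table α V) (P : Table α V → Prop) : ℚ :=
  (g3Card T P : ℚ) / (Multiset.card T : ℚ)

/-- The minimum number of tuples whose addition to `T` makes `P` hold. -/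
noncomputable def g5Card (T : Table α V) (P : Table α V → Prop) : ℕ :=
  sInf {n : ℕ | ∃ S : Table α V, P (T + S) ∧ Multiset.card S = n}

/-- `g5`: the minimum, over finite multisets `S` of tuples whose addition makes
the constraint `P` hold, of `|S|/|T|`. -/
noncomputable def g5 (T : Table α V) (P : Table α V → Prop) : ℚ :=
  (g5Card T P : ℚ) / (Multiset.card T : ℚ)

end SPDB


/-!
With `X = ∅` a multivalued dependency `∅ ↠ Y` says that a world is a cross product: any
`Y`-part of one tuple combines with any `(R ∖ Y)`-part of another. On the schema `{0, 1}` with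
`Y = {0}` a world is thus a full rectangle of pairs.

`T₁ = {(1,1), (1,1), (2,2), (2,2), (1,⊥)}`: adding `(2,1)` and completing `(1,⊥)` to `(1,2)`
gives the square `{1,2}²`, so `g5 ≤ 1/5`. Deleting at most one tuple leaves both `(1,1)` and
`(2,2)`, so some tuple must become `(2,1)`, which none can; hence `g3 ≥ 2/5`.

`T₂ = {1,2}² ∪ {(3,3)}`: deleting `(3,3)` leaves a square, so `g3 ≤ 1/5`. After adding one
tuple, a world has all of `1, 2, 3` in both columns, hence at least `9` tuples, but only `6`
are available; hence `g5 ≥ 2/5`.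
-/

lemma Multiset.mem_of_eq_add_of_card_lt_count {β : Type*} [DecidableEq β] {s t u : Multiset β}
    {a : β} (h : s = t + u) (hc : Multiset.card u < s.count a) : a ∈ t := by
  rw [← Multiset.count_pos]
  have := Multiset.count_le_card a u
  rw [h, Multiset.count_add] at hc
  omega

lemma Multiset.card_toFinset_map_mul_le_card {τ β γ : Type*} [DecidableEq β] [DecidableEq γ]
    {W : Multiset τ} (f : τ → β) (g : τ → γ)
    (h : ∀ x ∈ W, ∀ y ∈ W, ∃ z ∈ W, f z = f x ∧ g z = g y) :
    (W.map f).toFinset.card * (W.map g).toFinset.card ≤ Multiset.card W := by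
  have hsub :
      (W.map f).toFinset ×ˢ (W.map g).toFinset ⊆ (W.map fun z => (f z, g z)).toFinset := by
    intro p hp
    simp only [Finset.mem_product, Multiset.mem_toFinset, Multiset.mem_map] at hp ⊢
    obtain ⟨⟨x, hx, hfx⟩, ⟨y, hy, hgy⟩⟩ := hp
    obtain ⟨z, hz, hfz, hgz⟩ := h x hx y hy
    exact ⟨z, hz, Prod.ext (hfz.trans hfx) (hgz.trans hgy)⟩
  calc (W.map f).toFinset.card * (W.map g).toFinset.card
      = ((W.map f).toFinset ×ˢ (W.map g).toFinset).card := (Finset.card_product _ _).symm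
    _ ≤ (W.map fun z => (f z, g z)).toFinset.card := Finset.card_le_card hsub
    _ ≤ Multiset.card (W.map fun z => (f z, g z)) := Multiset.toFinset_card_le _
    _ = Multiset.card W := Multiset.card_map _ _

namespace SPDB

section General

variable {α V : Type}

@[simp] lemma mem_VD [DecidableEq V] {T : Table α V} {A : α} {v : V} :
    v ∈ VD T A ↔ ∃ t ∈ T, t A = some v := by
  simp [VD]

lemma VD_eq_empty [DecidableEq V] {T : Table α V} {A : α} (h : ∀ t ∈ T, t A = none) :
    VD T A = ∅ := by
  ext v
  simp only [mem_VD, Finset.notMem_empty, iff_false, not_exists, not_and]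
  intro t ht
  simp [h t ht]

lemma spExt_self_of_nullOutside [DecidableEq V] {T : Table α V} {R : Finset α} {t : Tuple α V}
    (hT : ∀ u ∈ T, ∀ A ∉ R, u A = none) (ht : ∀ A ∈ R, t A ≠ none) : spExt T t t := by
  intro A
  refine ⟨fun _ => rfl, fun hA => ?_⟩
  have hAR : A ∉ R := fun h => ht A h hA
  rw [VD_eq_empty fun u hu => hT u hu A hAR, if_neg Finset.not_nonempty_empty]
  exact hA

lemma spExt.apply_eq [DecidableEq V] {T : Table α V} {t t' : Tuple α V} (h : spExt T t t')
    {A : α} {v : V} (hA : t A = some v) : t' A = some v :=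
  ((h A).1 (by simp [hA])).trans hA

lemma spExt.weakSim_of_agrees [DecidableEq V] {T : Table α V} {X : Finset α}
    {u u' t t' : Tuple α V} (hu : spExt T u t) (hu' : spExt T u' t') (h : agrees X t t') :
    weakSim X u u' := by
  intro A hA
  by_cases h1 : u A = none
  · exact Or.inr (Or.inl h1)
  by_cases h2 : u' A = none
  · exact Or.inr (Or.inr h2)
  exact Or.inl (((hu A).1 h1).symm.trans ((h A hA).trans ((hu' A).1 h2)))

lemma spWorld.exists_mem_apply_eq [DecidableEq V] {T W : Table α V} (hW : spWorld T W)
    {t : Tuple α V} (ht : t ∈ T) {A : α} {v : V} (hA : t A = some v) :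
    ∃ w ∈ W, w A = some v :=
  let ⟨w, hw, hext⟩ := Multiset.exists_mem_of_rel_of_mem hW ht
  ⟨w, hw, hext.apply_eq hA⟩

lemma spWorld.exists_preimage [DecidableEq V] {T W : Table α V} (hW : spWorld T W)
    {w : Tuple α V} (hw : w ∈ W) : ∃ t ∈ T, spExt T t w :=
  Multiset.exists_mem_of_rel_of_mem (Multiset.rel_flip.2 hW) hw

lemma MVD_empty_iff_CJ [DecidableEq α] {R Y : Finset α} {W : Table α V} :
    MVD R ∅ Y W ↔ CJ Y (R \ Y) W := by
  simp [MVD, CJ, agrees]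

lemma spMVD_zero [DecidableEq α] [DecidableEq V] (R X Y : Finset α) :
    spMVD R (0 : Table α V) X Y :=
  ⟨0, Multiset.Rel.zero, by simp [MVD]⟩

lemma spMVD.exists_weakSim [DecidableEq α] [DecidableEq V] {R Y : Finset α} {T : Table α V}
    (h : spMVD R T ∅ Y) {u₁ u₂ : Tuple α V} (h₁ : u₁ ∈ T) (h₂ : u₂ ∈ T) :
    ∃ u ∈ T, weakSim Y u u₁ ∧ weakSim (R \ Y) u u₂ := by
  obtain ⟨W, hW, hMVD⟩ := h
  obtain ⟨w₁, hw₁, he₁⟩ := Multiset.exists_mem_of_rel_of_mem hW h₁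
  obtain ⟨w₂, hw₂, he₂⟩ := Multiset.exists_mem_of_rel_of_mem hW h₂
  obtain ⟨w, hw, hY, hZ⟩ := MVD_empty_iff_CJ.1 hMVD w₁ hw₁ w₂ hw₂
  obtain ⟨u, hu, he⟩ := hW.exists_preimage hw
  exact ⟨u, hu, he.weakSim_of_agrees he₁ hY, he.weakSim_of_agrees he₂ hZ⟩

variable {T : Table α V} {P : Table α V → Prop}

lemma g3Card_le {T₀ S : Table α V} (h : T = T₀ + S) (hP : P T₀) :
    g3Card T P ≤ Multiset.card S :=
  Nat.sInf_le ⟨T₀, S, h, hP, rfl⟩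

lemma le_g3Card {n : ℕ} (h0 : P 0)
    (h : ∀ T₀ S, T = T₀ + S → P T₀ → n ≤ Multiset.card S) : n ≤ g3Card T P :=
  le_csInf ⟨_, 0, T, (zero_add T).symm, h0, rfl⟩ fun _ ⟨T₀, S, hT, hP, hS⟩ =>
    hS ▸ h T₀ S hT hP

lemma g5Card_le {S : Table α V} (hP : P (T + S)) : g5Card T P ≤ Multiset.card S :=
  Nat.sInf_le ⟨S, hP, rfl⟩

lemma le_g5Card {n : ℕ} {S₀ : Table α V} (h0 : P (T + S₀))
    (h : ∀ S, P (T + S) → n ≤ Multiset.card S) : n ≤ g5Card T P :=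
  le_csInf ⟨_, S₀, h0, rfl⟩ fun _ ⟨S, hP, hS⟩ => hS ▸ h S hP

lemma g5_lt_g3_iff (hT : T ≠ 0) : g5 T P < g3 T P ↔ g5Card T P < g3Card T P := by
  have : (0 : ℚ) < Multiset.card T := by exact_mod_cast Multiset.card_pos.2 hT
  rw [g5, g3, div_lt_div_iff_of_pos_right this, Nat.cast_lt]

lemma g3_lt_g5_iff (hT : T ≠ 0) : g3 T P < g5 T P ↔ g3Card T P < g5Card T P := by
  have : (0 : ℚ) < Multiset.card T := by exact_mod_cast Multiset.card_pos.2 hT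
  rw [g5, g3, div_lt_div_iff_of_pos_right this, Nat.cast_lt]

end General

def row (p : ℕ × ℕ) : Tuple ℕ ℕ := fun A =>
  if A = 0 then some p.1 else if A = 1 then some p.2 else none

def rowNull (a : ℕ) : Tuple ℕ ℕ := fun A => if A = 0 then some a else none

@[simp] lemma row_zero (p : ℕ × ℕ) : row p 0 = some p.1 := rfl
@[simp] lemma row_one (p : ℕ × ℕ) : row p 1 = some p.2 := rfl
@[simp] lemma rowNull_zero (a : ℕ) : rowNull a 0 = some a := rfl
@[simp] lemma rowNull_one (a : ℕ) : rowNull a 1 = none := rfl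

lemma schema_sdiff_zero : ({0, 1} : Finset ℕ) \ {0} = {1} := by decide

lemma row_of_one_lt (p : ℕ × ℕ) {A : ℕ} (hA : 1 < A) : row p A = none := by
  simp [row, show A ≠ 0 by omega, show A ≠ 1 by omega]

lemma rowNull_of_one_lt (a : ℕ) {A : ℕ} (hA : 1 < A) : rowNull a A = none := by
  simp [rowNull, show A ≠ 0 by omega]

lemma row_injective : Function.Injective row := fun _ _ h =>
  Prod.ext (Option.some_injective _ (congrFun h 0)) (Option.some_injective _ (congrFun h 1))

lemma row_ne_rowNull (p : ℕ × ℕ) (a : ℕ) : row p ≠ rowNull a := fun h => by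
  simpa using congrFun h 1

lemma spExt_row_self {T : Table ℕ ℕ} (hT : ∀ t ∈ T, ∀ A, 1 < A → t A = none)
    (p : ℕ × ℕ) :
    spExt T (row p) (row p) := by
  refine spExt_self_of_nullOutside (R := {0, 1}) (fun t ht A hA => hT t ht A ?_) fun A hA => ?_
  · simp only [Finset.mem_insert, Finset.mem_singleton, not_or] at hA
    omega
  · simp only [Finset.mem_insert, Finset.mem_singleton] at hA
    rcases hA with rfl | rfl <;> simp

lemma spExt_rowNull {T : Table ℕ ℕ} (hT : ∀ t ∈ T, ∀ A, 1 < A → t A = none) {a v : ℕ}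
    (hv : v ∈ VD T 1) : spExt T (rowNull a) (row (a, v)) := by
  intro A
  rcases (show A = 0 ∨ A = 1 ∨ 1 < A by omega) with rfl | rfl | hA
  · simp
  · simp only [rowNull_one, ne_eq, not_true_eq_false, IsEmpty.forall_iff, row_one, true_and,
      forall_const]
    rw [if_pos ⟨v, hv⟩]
    exact ⟨v, hv, rfl⟩
  · rw [rowNull_of_one_lt a hA, row_of_one_lt _ hA,
      VD_eq_empty fun t ht => hT t ht A hA, if_neg Finset.not_nonempty_empty]
    simp

lemma spWorld_map_row (L : Multiset (ℕ × ℕ)) : spWorld (L.map row) (L.map row) :=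
  Multiset.rel_refl_of_refl_on fun _ ht => by
    obtain ⟨p, -, rfl⟩ := Multiset.mem_map.1 ht
    refine spExt_row_self (fun t ht A hA => ?_) p
    obtain ⟨q, -, rfl⟩ := Multiset.mem_map.1 ht
    exact row_of_one_lt q hA

lemma spWorld_rowNull_cons {L : Multiset (ℕ × ℕ)} (a : ℕ) {v : ℕ}
    (hv : v ∈ L.map Prod.snd) :
    spWorld (rowNull a ::ₘ L.map row) (((a, v) ::ₘ L).map row) := by
  have hT : ∀ t ∈ rowNull a ::ₘ L.map row, ∀ A, 1 < A → t A = none := by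
    intro t ht A hA
    rcases Multiset.mem_cons.1 ht with rfl | ht
    · exact rowNull_of_one_lt a hA
    · obtain ⟨q, -, rfl⟩ := Multiset.mem_map.1 ht
      exact row_of_one_lt q hA
  obtain ⟨q, hq, rfl⟩ := Multiset.mem_map.1 hv
  rw [Multiset.map_cons]
  refine Multiset.Rel.cons (spExt_rowNull hT ?_) (Multiset.rel_refl_of_refl_on fun _ ht => ?_)
  · exact mem_VD.2 ⟨row q, Multiset.mem_cons_of_mem (Multiset.mem_map_of_mem _ hq), rfl⟩
  · obtain ⟨p, -, rfl⟩ := Multiset.mem_map.1 ht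
    exact spExt_row_self hT p

lemma CJ_map_row {L : Multiset (ℕ × ℕ)} (h : ∀ p ∈ L, ∀ q ∈ L, (p.1, q.2) ∈ L) :
    CJ {0} {1} (L.map row) := by
  intro t₁ ht₁ t₂ ht₂
  obtain ⟨p, hp, rfl⟩ := Multiset.mem_map.1 ht₁
  obtain ⟨q, hq, rfl⟩ := Multiset.mem_map.1 ht₂
  exact ⟨row (p.1, q.2), Multiset.mem_map_of_mem _ (h p hp q hq), by simp [agrees],
    by simp [agrees]⟩

lemma spMVD_of_spWorld_map_row {T : Table ℕ ℕ} {L : Multiset (ℕ × ℕ)}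
    (hW : spWorld T (L.map row)) (h : ∀ p ∈ L, ∀ q ∈ L, (p.1, q.2) ∈ L) :
    spMVD {0, 1} T ∅ {0} :=
  ⟨_, hW, MVD_empty_iff_CJ.2 <| by
    rw [schema_sdiff_zero]
    exact CJ_map_row h⟩

def pairsA : Multiset (ℕ × ℕ) := {(1, 1), (1, 1), (2, 2), (2, 2)}

def tableA : Table ℕ ℕ := rowNull 1 ::ₘ pairsA.map row

def square : Multiset (ℕ × ℕ) := {(1, 1), (1, 2), (2, 1), (2, 2)}

def tableB : Table ℕ ℕ := (square + {(3, 3)}).map row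

lemma card_tableA : Multiset.card tableA = 5 := rfl

lemma card_tableB : Multiset.card tableB = 5 := rfl

lemma g5Card_tableA_le_one : g5Card tableA (fun U => spMVD {0, 1} U ∅ {0}) ≤ 1 :=
  g5Card_le (S := {row (2, 1)}) <| spMVD_of_spWorld_map_row
    (spWorld_rowNull_cons 1 (v := 2) (L := pairsA + {(2, 1)}) (by decide)) (by decide)

lemma count_row_tableA [DecidableEq (Tuple ℕ ℕ)] (p : ℕ × ℕ) :
    tableA.count (row p) = pairsA.count p := by
  rw [tableA, Multiset.count_cons_of_ne (row_ne_rowNull p 1),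
    Multiset.count_map_eq_count' row _ row_injective]

lemma not_weakSim_of_mem_tableA {u : Tuple ℕ ℕ} (hu : u ∈ tableA) :
    ¬ (weakSim {0} u (row (2, 2)) ∧ weakSim {1} u (row (1, 1))) := by
  simp only [tableA, pairsA, Multiset.insert_eq_cons, Multiset.map_cons, Multiset.map_singleton,
    Multiset.mem_cons, Multiset.mem_singleton, or_self, or_self_left] at hu
  rcases hu with rfl | rfl | rfl <;> simp [weakSim]

lemma two_le_g3Card_tableA : 2 ≤ g3Card tableA (fun U => spMVD {0, 1} U ∅ {0}) := by
  classical
  refine le_g3Card (spMVD_zero _ _ _) fun T₀ S hT hP => ?_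
  by_contra! hS
  have hmem : ∀ p, tableA.count (row p) = 2 → row p ∈ T₀ := fun p hp =>
    Multiset.mem_of_eq_add_of_card_lt_count hT (by omega)
  obtain ⟨u, hu, h⟩ := hP.exists_weakSim (hmem (2, 2) (by rw [count_row_tableA]; decide))
    (hmem (1, 1) (by rw [count_row_tableA]; decide))
  rw [schema_sdiff_zero] at h
  exact not_weakSim_of_mem_tableA (Multiset.mem_of_le (Multiset.le_iff_exists_add.2 ⟨S, hT⟩) hu)
    h

lemma g3Card_tableB_le_one : g3Card tableB (fun U => spMVD {0, 1} U ∅ {0}) ≤ 1 :=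
  g3Card_le (T₀ := square.map row) (S := {row (3, 3)}) (by simp [tableB])
    (spMVD_of_spWorld_map_row (spWorld_map_row _) (by decide))

lemma three_le_card_column {S W : Table ℕ ℕ} (hW : spWorld (tableB + S) W) {A : ℕ}
    (hA : A = 0 ∨ A = 1) : 3 ≤ (W.map (· A)).toFinset.card := by
  have hsub : ({some 1, some 2, some 3} : Finset (Option ℕ)) ⊆ (W.map (· A)).toFinset := by
    intro v hv
    obtain ⟨i, hi, rfl⟩ : ∃ i ∈ ({1, 2, 3} : Finset ℕ), v = some i := by simpa using hv
    have hdiag : (i, i) ∈ square + {(3, 3)} := by revert i; decide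
    obtain ⟨w, hw, hwA⟩ := hW.exists_mem_apply_eq
      (Multiset.mem_add.2 (Or.inl (Multiset.mem_map_of_mem row hdiag)))
      (show row (i, i) A = some i by rcases hA with rfl | rfl <;> rfl)
    exact Multiset.mem_toFinset.2 (Multiset.mem_map.2 ⟨w, hw, hwA⟩)
  exact Finset.card_le_card hsub

lemma two_le_g5Card_tableB : 2 ≤ g5Card tableB (fun U => spMVD {0, 1} U ∅ {0}) := by
  refine le_g5Card (S₀ := ({(1, 3), (2, 3), (3, 1), (3, 2)} : Multiset (ℕ × ℕ)).map row)
    (spMVD_of_spWorld_map_row (L := square + {(3, 3)} + {(1, 3), (2, 3), (3, 1), (3, 2)})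
      (by rw [tableB, ← Multiset.map_add]; exact spWorld_map_row _) (by decide))
    fun S ⟨W, hW, hMVD⟩ => ?_
  rw [MVD_empty_iff_CJ, schema_sdiff_zero] at hMVD
  have hrect := Multiset.card_toFinset_map_mul_le_card (W := W) (· 0) (· 1) fun x hx y hy =>
    let ⟨z, hz, h₀, h₁⟩ := hMVD x hx y hy
    ⟨z, hz, h₀ 0 (Finset.mem_singleton_self 0), h₁ 1 (Finset.mem_singleton_self 1)⟩
  have hcard : Multiset.card W = 5 + Multiset.card S := by
    rw [← Multiset.card_eq_card_of_rel hW, Multiset.card_add, card_tableB]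
  have := Nat.mul_le_mul (three_le_card_column hW (.inl rfl)) (three_le_card_column hW (.inr rfl))
  omega

end SPDB

open SPDB in
/-- `g3` and `g5` are independent for spMVDs: there are a table with
`g3(X ↠_sp Y) > g5(X ↠_sp Y)` and a table with `g3(X ↠_sp Y) < g5(X ↠_sp Y)`. -/
theorem statement15 :
    (∃ (R1 X1 Y1 : Finset ℕ) (T1 : Table ℕ ℕ), X1 ⊆ R1 ∧ Y1 ⊆ R1 ∧
      g5 T1 (fun U => spMVD R1 U X1 Y1) < g3 T1 (fun U => spMVD R1 U X1 Y1)) ∧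
    (∃ (R2 X2 Y2 : Finset ℕ) (T2 : Table ℕ ℕ), X2 ⊆ R2 ∧ Y2 ⊆ R2 ∧
      g3 T2 (fun U => spMVD R2 U X2 Y2) < g5 T2 (fun U => spMVD R2 U X2 Y2)) := by
  refine ⟨⟨{0, 1}, ∅, {0}, tableA, Finset.empty_subset _, by decide, ?_⟩,
    ⟨{0, 1}, ∅, {0}, tableB, Finset.empty_subset _, by decide, ?_⟩⟩
  · rw [g5_lt_g3_iff (Multiset.card_pos.1 (by rw [card_tableA]; omega))]
    have := g5Card_tableA_le_one
    have := two_le_g3Card_tableA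
    omega
  · rw [g3_lt_g5_iff (Multiset.card_pos.1 (by rw [card_tableB]; omega))]
    have := g3Card_tableB_le_one
    have := two_le_g5Card_tableB
    omega
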